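/- Let 0 < p < ∞ and q = ∞, and let f : ℝ → ℂ be measurable with compact support. Then lim_{t→0⁺} t^{-1/p} ‖ (D_t f)~ ‖_{L^{p,∞}(𝕋)} = ‖f‖_{L^{p,∞}(ℝ)}, where (D_t f)~ denotes the 1-periodization of D_t f(x) = f(t⁻¹ x). -/

import Mathlib

open MeasureTheory Filter Set
open scoped ENNReal NNReal Topology

noncomputable def distrib {α : Type*} [MeasurableSpace α] (μ : Measure α)
    (f : α → ℂ) (l : ℝ) : ℝ≥0∞ := μ {x | l < ‖f x‖}

noncomputable def rearr {α : Type*} [MeasurableSpace α] (μ : Measure α)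
    (f : α → ℂ) (t : ℝ) : ℝ≥0∞ :=
  ⨅ (l : ℝ≥0) (_ : distrib μ f l ≤ ENNReal.ofReal t), (l : ℝ≥0∞)

noncomputable def lorentzNorm {α : Type*} [MeasurableSpace α] (μ : Measure α)
    (f : α → ℂ) (p q : ℝ≥0∞) : ℝ≥0∞ :=
  if q = ∞ then ⨆ t ∈ Set.Ioi (0:ℝ), ENNReal.ofReal (t ^ p.toReal⁻¹) * rearr μ f t
  else (ENNReal.ofReal (q.toReal / p.toReal) *
      ∫⁻ t in Set.Ioi (0:ℝ),
        (ENNReal.ofReal (t ^ p.toReal⁻¹) * rearr μ f t) ^ q.toReal / ENNReal.ofReal t)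
      ^ q.toReal⁻¹

noncomputable def torusMeasure : Measure ℝ := volume.restrict (Set.Ico (-(1/2) : ℝ) (1/2))

/-! For small `t` the dilate `f (t⁻¹ * ·)` is supported in `(-1/2, 1/2)`, so its periodization
agrees with it on the fundamental domain and has the same distribution function, which is `t`
times that of `f`. Hence the decreasing rearrangement is `s ↦ f^*(s / t)` and the weak-`L^p`
quasinorm picks up exactly the factor `t^{1/p}`: the expression in the limit is eventually
constant. -/

open Function

lemma tsum_add_int_eq_self_of_support_subset {g : ℝ → ℂ}
    (hg : support g ⊆ Ioo (-(1/2)) (1/2)) {x : ℝ} (hx : x ∈ Ico (-(1/2) : ℝ) (1/2)) :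
    ∑' k : ℤ, g (x + k) = g x := by
  rw [tsum_eq_single 0 fun k hk => notMem_support.1 fun hk' => ?_]
  · simp
  obtain ⟨hlo, hhi⟩ := hg hk'
  have hk1 : (1 : ℝ) ≤ |(k : ℝ)| := by exact_mod_cast Int.one_le_abs hk
  rcases le_abs'.1 hk1 with h | h <;> linarith [hx.1, hx.2]

lemma distrib_torusMeasure_periodization {g : ℝ → ℂ}
    (hg : support g ⊆ Ioo (-(1/2)) (1/2)) {l : ℝ} (hl : 0 ≤ l) :
    distrib torusMeasure (fun x => ∑' k : ℤ, g (x + k)) l = distrib volume g l := by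
  have hsub : {x | l < ‖g x‖} ⊆ Ico (-(1/2)) (1/2) := fun x (hx : l < ‖g x‖) =>
    Ioo_subset_Ico_self <| hg <| mem_support.2 fun hgx => by
      simp only [hgx, norm_zero] at hx; linarith
  rw [distrib, distrib, torusMeasure, Measure.restrict_apply' measurableSet_Ico]
  congr 1
  ext x
  by_cases hx : x ∈ Ico (-(1/2) : ℝ) (1/2)
  · simp only [mem_inter_iff, mem_ofPred_eq, tsum_add_int_eq_self_of_support_subset hg hx, hx,
      and_true]
  · simp only [mem_inter_iff, hx, and_false, false_iff]
    exact fun h => hx (hsub h)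

lemma distrib_volume_comp_mul_left (f : ℝ → ℂ) {c : ℝ} (hc : c ≠ 0) (l : ℝ) :
    distrib volume (fun x => f (c * x)) l = ENNReal.ofReal |c⁻¹| * distrib volume f l :=
  Real.volume_preimage_mul_left hc {y | l < ‖f y‖}

lemma rearr_eq_of_distrib_eq_mul {α β : Type*} [MeasurableSpace α] [MeasurableSpace β]
    {μ : Measure α} {ν : Measure β} {g : α → ℂ} {f : β → ℂ} {c : ℝ} (hc : 0 < c)
    (h : ∀ l : ℝ≥0, distrib μ g l = ENNReal.ofReal c * distrib ν f l) (s : ℝ) :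
    rearr μ g s = rearr ν f (s / c) := by
  refine iInf_congr fun l => iInf_congr_Prop ?_ fun _ => rfl
  rw [h, ENNReal.ofReal_div_of_pos hc, mul_comm, ENNReal.le_div_iff_mul_le
    (.inl (ENNReal.ofReal_pos.2 hc).ne') (.inl ENNReal.ofReal_ne_top)]

lemma lorentzNorm_top_eq_mul_of_rearr_eq {α β : Type*} [MeasurableSpace α] [MeasurableSpace β]
    {μ : Measure α} {ν : Measure β} {g : α → ℂ} {f : β → ℂ} {c : ℝ} (hc : 0 < c)
    (p : ℝ≥0∞) (h : ∀ s, rearr μ g s = rearr ν f (s / c)) :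
    lorentzNorm μ g p ∞ = ENNReal.ofReal (c ^ p.toReal⁻¹) * lorentzNorm ν f p ∞ := by
  simp only [lorentzNorm, if_true, h]
  have hIoi : Ioi (0 : ℝ) = (c * ·) '' Ioi 0 := by rw [image_mul_left_Ioi hc, mul_zero]
  conv_lhs => rw [hIoi, iSup_image]
  rw [ENNReal.mul_iSup]
  refine iSup_congr fun u => ?_
  rw [ENNReal.mul_iSup]
  refine iSup_congr fun (hu : 0 < u) => ?_
  rw [mul_div_cancel_left₀ u hc.ne', Real.mul_rpow hc.le hu.le,
    ENNReal.ofReal_mul (by positivity), mul_assoc]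

lemma HasCompactSupport.eventually_support_comp_inv_mul_subset {M : Type*} [Zero M]
    [TopologicalSpace M] {f : ℝ → M} (hf : HasCompactSupport f) :
    ∀ᶠ t in 𝓝[>] 0, support (fun x => f (t⁻¹ * x)) ⊆ Ioo (-(1/2)) (1/2) := by
  obtain ⟨r, hr, hball⟩ := hf.isCompact.isBounded.subset_ball_lt 0 0
  filter_upwards [Ioo_mem_nhdsGT (show (0 : ℝ) < 1 / (2 * r) by positivity)]
    with t ⟨ht, htr⟩ x hx
  have hx' : |t⁻¹ * x| < r := by
    simpa using hball (subset_tsupport _ hx)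
  rw [abs_mul, abs_of_pos (inv_pos.2 ht), inv_mul_lt_iff₀ ht] at hx'
  rw [lt_div_iff₀ (by positivity)] at htr
  exact abs_lt.1 (by nlinarith)

theorem stmt5_general (p : ℝ) (hp : 0 < p) (f : ℝ → ℂ)
    (hsupp : HasCompactSupport f) :
    Tendsto (fun t : ℝ => ENNReal.ofReal (t ^ (-(1/p))) *
        lorentzNorm torusMeasure (fun x => ∑' k : ℤ, f (t⁻¹ * (x + k)))
          (ENNReal.ofReal p) ∞)
      (𝓝[>] 0)
      (𝓝 (lorentzNorm volume f (ENNReal.ofReal p) ∞)) := by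
  refine tendsto_const_nhds.congr' ?_
  filter_upwards [self_mem_nhdsWithin, hsupp.eventually_support_comp_inv_mul_subset]
    with t (ht : 0 < t) hsub
  have hrearr (s : ℝ) : rearr torusMeasure (fun x => ∑' k : ℤ, f (t⁻¹ * (x + k))) s
      = rearr volume f (s / t) :=
    rearr_eq_of_distrib_eq_mul ht (fun l => (distrib_torusMeasure_periodization hsub l.2).trans <|
      (distrib_volume_comp_mul_left f (inv_ne_zero ht.ne') l).trans <| by
        rw [inv_inv, abs_of_pos ht]) s
  rw [lorentzNorm_top_eq_mul_of_rearr_eq ht _ hrearr, ← mul_assoc,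
    ← ENNReal.ofReal_mul (by positivity), ENNReal.toReal_ofReal hp.le, ← Real.rpow_add ht,
    one_div, neg_add_cancel, Real.rpow_zero, ENNReal.ofReal_one, one_mul]

theorem stmt5 (p : ℝ) (hp : 0 < p) (f : ℝ → ℂ) (hf : Measurable f)
    (hsupp : HasCompactSupport f) :
    Tendsto (fun t : ℝ => ENNReal.ofReal (t ^ (-(1/p))) *
        lorentzNorm torusMeasure (fun x => ∑' k : ℤ, f (t⁻¹ * (x + k)))
          (ENNReal.ofReal p) ∞)
      (𝓝[>] 0)
      (𝓝 (lorentzNorm volume f (ENNReal.ofReal p) ∞)) :=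
  stmt5_general p hp f hsupp
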